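/- Every sequence of length at least 22 over a 3-letter alphabet that avoids repetitions of length at most 6 has three consecutive gaps g_1, g_2, g_3 (between four consecutive peaks) with g_1 ≥ g_2 and g_2 ≤ g_3. -/

import Mathlib

/-!
Consecutive entries differ, and between two consecutive peaks every letter differs from the
one two places further on; over three letters this makes the word periodic with period 3
there, so a gap of 4 or more would produce a square of length 6. Hence every gap is at
most 3. If no gap is a valley, the gap sequence strictly increases and then, after at most
one plateau, strictly decreases; with gaps in `{0, …, 3}` the peaks and gaps then cover at
most `9 + 2 · (0 + 1 + 2 + 3) = 21` positions.
-/

open Finset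

/-- A sequence `s` of length `n` avoids repetitions of length at most 6 if no block of
`2l` consecutive entries with `1 ≤ l ≤ 3` forms a repetition. -/
def AvoidsShortReps (n : ℕ) (s : ℕ → Fin 3) : Prop :=
  ∀ start l : ℕ, 1 ≤ l → l ≤ 3 → start + 2 * l ≤ n →
    ¬ (∀ i, i < l → s (start + i) = s (start + l + i))

/-- A position `p` of a sequence of length `n` is a peak if it is the first or the last
position, or its two neighboring entries are equal. -/
def IsPeak (n : ℕ) (s : ℕ → Fin 3) (p : ℕ) : Prop :=
  p < n ∧ (p = 0 ∨ p = n - 1 ∨ s (p - 1) = s (p + 1))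

/-- `p` and `q` are consecutive peaks (with `p < q` and no peak strictly in between);
the gap between them is `q - p - 1`. -/
def ConsecutivePeaks (n : ℕ) (s : ℕ → Fin 3) (p q : ℕ) : Prop :=
  IsPeak n s p ∧ IsPeak n s q ∧ p < q ∧ ∀ r, p < r → r < q → ¬ IsPeak n s r

theorem fin_three_eq_of_ne {x y z w : Fin 3} (hxy : x ≠ y) (hyz : y ≠ z) (hxz : x ≠ z)
    (hwy : w ≠ y) (hwz : w ≠ z) : w = x := by
  omega

section

variable {n : ℕ} {s : ℕ → Fin 3}

theorem AvoidsShortReps.apply_ne_apply_succ (h : AvoidsShortReps n s) {i : ℕ} (hi : i + 2 ≤ n) :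
    s i ≠ s (i + 1) := fun he =>
  h i 1 le_rfl (by norm_num) (by omega) fun j hj => by
    obtain rfl : j = 0 := by omega
    exact he

theorem apply_pred_ne_apply_succ_of_not_isPeak {r : ℕ} (hr : r < n) (hnp : ¬ IsPeak n s r) :
    s (r - 1) ≠ s (r + 1) := fun he => hnp ⟨hr, Or.inr (Or.inr he)⟩

theorem exists_consecutivePeaks_of_isPeak {p : ℕ} (hp : IsPeak n s p) (hpn : p < n - 1) :
    ∃ q, ConsecutivePeaks n s p q := by
  classical
  have hex : ∃ q, p < q ∧ IsPeak n s q := ⟨n - 1, hpn, by omega, Or.inr (Or.inl rfl)⟩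
  exact ⟨Nat.find hex, hp, (Nat.find_spec hex).2, (Nat.find_spec hex).1,
    fun r hpr hrq hr => Nat.find_min hex hrq ⟨hpr, hr⟩⟩

theorem ConsecutivePeaks.le_add_four (h : AvoidsShortReps n s) {p q : ℕ}
    (hpq : ConsecutivePeaks n s p q) : q ≤ p + 4 := by
  by_contra! hq
  have hqn : q < n := hpq.2.1.1
  have hadj : ∀ i, i ≤ p + 4 → s i ≠ s (i + 1) := fun i hi =>
    h.apply_ne_apply_succ (by omega)
  have hskip : ∀ i, p ≤ i → i ≤ p + 3 → s i ≠ s (i + 2) := fun i hpi hi => by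
    simpa using apply_pred_ne_apply_succ_of_not_isPeak (r := i + 1) (by omega)
      (hpq.2.2.2 (i + 1) (by omega) (by omega))
  have hperiod : ∀ i, p ≤ i → i ≤ p + 2 → s (i + 3) = s i := fun i hpi hi =>
    fin_three_eq_of_ne (hadj i (by omega)) (hadj (i + 1) (by omega)) (hskip i hpi (by omega))
      (hskip (i + 1) (by omega) (by omega)).symm (hadj (i + 2) (by omega)).symm
  exact h p 3 (by norm_num) le_rfl (by omega) fun i hi => by
    rw [show p + 3 + i = p + i + 3 by omega, hperiod (p + i) (by omega) (by omega)]

def NoGapValley (n : ℕ) (s : ℕ → Fin 3) : Prop :=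
  ∀ a b c d, ConsecutivePeaks n s a b → ConsecutivePeaks n s b c →
    ConsecutivePeaks n s c d → c - b ≤ b - a → d - c < c - b

/-- Once a gap fails to grow, all later gaps strictly decrease, so after `q` the peaks and gaps
occupy at most `∑_{g < q - p - 1} (g + 1) = ∑_{j < q - p} j` positions. -/
theorem ConsecutivePeaks.le_add_sum_of_descent (hv : NoGapValley n s) {o p q : ℕ}
    (hop : ConsecutivePeaks n s o p) (hpq : ConsecutivePeaks n s p q) (hdesc : q - p ≤ p - o) :
    n ≤ q + 1 + ∑ j ∈ range (q - p), j := by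
  by_cases hqn : q = n - 1
  · omega
  obtain ⟨r, hqr⟩ := exists_consecutivePeaks_of_isPeak hpq.2.1 (by have := hpq.2.1.1; omega)
  have hqr_lt : q < r := hqr.2.2.1
  have hrn : r < n := hqr.2.1.1
  have hshrink := hv o p q r hop hpq hqr hdesc
  have hrest := hpq.le_add_sum_of_descent hv hqr hshrink.le
  have hmono : ∑ j ∈ range (r - q + 1), j ≤ ∑ j ∈ range (q - p), j :=
    sum_le_sum_of_subset (range_mono (by omega))
  rw [sum_range_succ] at hmono
  omega
termination_by n - q

/-- Here `21 = 1 + 2 · ∑_{j < 5} j`: the gaps after `q` can still climb to `3` and fall back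
to `0`. -/
theorem ConsecutivePeaks.add_sum_le (h : AvoidsShortReps n s) (hv : NoGapValley n s) {p q : ℕ}
    (hpq : ConsecutivePeaks n s p q) : n + ∑ j ∈ range (q - p + 1), j ≤ q + 21 := by
  have hpq_lt : p < q := hpq.2.2.1
  have hqn : q < n := hpq.2.1.1
  have hsum : ∑ j ∈ range (q - p + 1), j ≤ 10 :=
    (sum_le_sum_of_subset (range_mono (by have := hpq.le_add_four h; omega))).trans
      (by decide : ∑ j ∈ range 5, j ≤ 10)
  by_cases hq : q = n - 1
  · omega
  obtain ⟨r, hqr⟩ := exists_consecutivePeaks_of_isPeak hpq.2.1 (by omega)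
  have hqr_lt : q < r := hqr.2.2.1
  have hrn : r < n := hqr.2.1.1
  by_cases hdesc : r - q ≤ q - p
  · have hrest := hpq.le_add_sum_of_descent hv hqr hdesc
    have hmono : ∑ j ∈ range (r - q + 1), j ≤ ∑ j ∈ range (q - p + 1), j :=
      sum_le_sum_of_subset (range_mono (by omega))
    rw [sum_range_succ] at hmono
    omega
  · have hrest := hqr.add_sum_le h hv
    have hmono : ∑ j ∈ range (q - p + 1), j ≤ ∑ j ∈ range (r - q), j :=
      sum_le_sum_of_subset (range_mono (by omega))
    rw [sum_range_succ] at hrest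
    omega
termination_by n - q

end

/-- Every sequence of length at least 22 over 3 letters avoiding repetitions of length
at most 6 has three consecutive gaps `g₁ ≥ g₂ ≤ g₃` between four consecutive peaks. -/
theorem stmt_11 (n : ℕ) (hn : 22 ≤ n) (s : ℕ → Fin 3) (h : AvoidsShortReps n s) :
    ∃ p₀ p₁ p₂ p₃ : ℕ,
      ConsecutivePeaks n s p₀ p₁ ∧ ConsecutivePeaks n s p₁ p₂ ∧
      ConsecutivePeaks n s p₂ p₃ ∧
      p₂ - p₁ - 1 ≤ p₁ - p₀ - 1 ∧ p₂ - p₁ - 1 ≤ p₃ - p₂ - 1 := by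
  by_contra hvalley
  have hv : NoGapValley n s := fun a b c d hab hbc hcd hle => by
    have := hab.2.2.1
    have := hbc.2.2.1
    have := hcd.2.2.1
    by_contra hge
    exact hvalley ⟨a, b, c, d, hab, hbc, hcd, by omega, by omega⟩
  have hpeak0 : IsPeak n s 0 := ⟨by omega, Or.inl rfl⟩
  obtain ⟨q, h0q⟩ := exists_consecutivePeaks_of_isPeak hpeak0 (by omega)
  have hlen := h0q.add_sum_le h hv
  rw [sum_range_succ] at hlen
  omega
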